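/- arXiv:2012.13804 — 4 statements merged into one kernel-verified Lean document; each statement's English description precedes it below -/
import Mathlib

section
/- Let n ∈ ℕ, q' ∈ ℝⁿ and h₂ > 0. Define F : ℝⁿ \ {q'} → ℝ by F(q) = (1/(3‖q − q'‖³)) · exp(−‖q − q'‖²/h₂²). Then F is differentiable at every q ≠ q', and its gradient is ∇F(q) = −β(q) · (q − q'), where β(q) = [exp(−‖q − q'‖²/h₂²) / ‖q − q'‖] · (1/‖q − q'‖⁴ + 2/(3 h₂² ‖q − q'‖²)). -/
/-!
Write `r = ‖q - q'‖`, so that `F q = (η ŵ)(r)` with `η r = 1 / (3 r³)` and `ŵ r = exp (-r² / h₂²)`.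
Away from `q'` the distance is differentiable with gradient `(q - q') / r` (take the square root
of `‖q - q'‖²`, whose gradient is `2 (q - q')`), so the chain rule gives
`∇F(q) = ((η ŵ)'(r) / r) • (q - q')`, and the product rule
`(η ŵ)'(r) = -ŵ(r) (1 / r⁴ + 2 / (3 h₂² r²))` identifies `(η ŵ)'(r) / r` with `-β(q)`.
-/

open Real InnerProductSpace

section Gradient

variable {E : Type*} [NormedAddCommGroup E] [InnerProductSpace ℝ E] [CompleteSpace E]

theorem HasDerivAt.comp_hasGradientAt {f : ℝ → ℝ} {f' : ℝ} {g : E → ℝ} {g' x : E}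
    (hf : HasDerivAt f f' (g x)) (hg : HasGradientAt g g' x) :
    HasGradientAt (fun y => f (g y)) (f' • g') x := by
  rw [hasGradientAt_iff_hasFDerivAt] at hg ⊢
  rw [map_smul]
  exact hf.comp_hasFDerivAt x hg

theorem hasGradientAt_norm_sub_sq (a x : E) :
    HasGradientAt (fun p => ‖p - a‖ ^ 2) ((2 : ℝ) • (x - a)) x := by
  rw [hasGradientAt_iff_hasFDerivAt]
  refine ((hasFDerivAt_id x).sub_const a).norm_sq.congr_fderiv ?_
  ext v
  simp

theorem hasGradientAt_norm_sub {a x : E} (hx : x ≠ a) :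
    HasGradientAt (fun p => ‖p - a‖) (‖x - a‖⁻¹ • (x - a)) x := by
  have hr : ‖x - a‖ ≠ 0 := norm_ne_zero_iff.mpr (sub_ne_zero.mpr hx)
  have hsqrt : HasDerivAt sqrt (1 / (2 * ‖x - a‖)) (‖x - a‖ ^ 2) := by
    simpa [sqrt_sq (norm_nonneg _)] using hasDerivAt_sqrt (pow_ne_zero 2 hr)
  have h := hsqrt.comp_hasGradientAt (g := fun p => ‖p - a‖ ^ 2) (hasGradientAt_norm_sub_sq a x)
  rw [smul_smul, one_div_mul_eq_div, div_mul_cancel_left₀ two_ne_zero] at h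
  simpa only [sqrt_sq (norm_nonneg _)] using h

theorem HasDerivAt.hasGradientAt_comp_norm_sub {f : ℝ → ℝ} {f' : ℝ} {a x : E}
    (hf : HasDerivAt f f' ‖x - a‖) (hx : x ≠ a) :
    HasGradientAt (fun p => f ‖p - a‖) ((f' / ‖x - a‖) • (x - a)) x := by
  rw [div_eq_mul_inv, ← smul_smul]
  exact hf.comp_hasGradientAt (g := fun p => ‖p - a‖) (hasGradientAt_norm_sub hx)

end Gradient

noncomputable def repulsionKernel (r : ℝ) : ℝ := 1 / (3 * r ^ 3)

noncomputable def gaussianWeight (h r : ℝ) : ℝ := exp (-r ^ 2 / h ^ 2)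

theorem hasDerivAt_repulsionKernel {r : ℝ} (hr : r ≠ 0) :
    HasDerivAt repulsionKernel (-1 / r ^ 4) r := by
  have h := ((hasDerivAt_pow 3 r).const_mul 3).inv (by positivity)
  rw [show repulsionKernel = (fun s => 3 * s ^ 3)⁻¹ from funext fun s => one_div _]
  refine h.congr_deriv ?_
  norm_num
  field_simp

theorem hasDerivAt_gaussianWeight (h r : ℝ) :
    HasDerivAt (gaussianWeight h) (-2 * r / h ^ 2 * gaussianWeight h r) r := by
  refine ((hasDerivAt_pow 2 r).neg.div_const (h ^ 2)).exp.congr_deriv ?_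
  simp only [gaussianWeight, Pi.neg_apply]
  ring

theorem mlop_repulsion_gradient_general (n : ℕ) (q' : EuclideanSpace ℝ (Fin n)) (h₂ : ℝ)
    (F : EuclideanSpace ℝ (Fin n) → ℝ)
    (hF : ∀ q, F q = 1 / (3 * ‖q - q'‖ ^ 3) * Real.exp (-‖q - q'‖ ^ 2 / h₂ ^ 2))
    (β : EuclideanSpace ℝ (Fin n) → ℝ)
    (hβ : ∀ q, β q = Real.exp (-‖q - q'‖ ^ 2 / h₂ ^ 2) / ‖q - q'‖ *
      (1 / ‖q - q'‖ ^ 4 + 2 / (3 * h₂ ^ 2 * ‖q - q'‖ ^ 2))) :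
    ∀ q, q ≠ q' → DifferentiableAt ℝ F q ∧ HasGradientAt F ((-β q) • (q - q')) q := by
  intro q hq
  have hr : ‖q - q'‖ ≠ 0 := norm_ne_zero_iff.mpr (sub_ne_zero.mpr hq)
  have hF' : F = fun p => (repulsionKernel * gaussianWeight h₂) ‖p - q'‖ := funext hF
  have hgrad : HasGradientAt F ((-β q) • (q - q')) q := by
    rw [hF']
    convert ((hasDerivAt_repulsionKernel hr).mul (hasDerivAt_gaussianWeight h₂ _)
      ).hasGradientAt_comp_norm_sub hq using 2
    rw [hβ, repulsionKernel, gaussianWeight]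
    field_simp
    ring
  exact ⟨hgrad.differentiableAt, hgrad⟩

/-- **Gradient of a single MLOP repulsion term.**
For `F q = (1/(3‖q − q'‖³)) · exp(−‖q − q'‖²/h₂²)`, the function `F` is differentiable at every
`q ≠ q'` and its gradient there is `∇F(q) = −β(q) • (q − q')` with
`β(q) = [exp(−‖q − q'‖²/h₂²)/‖q − q'‖] · (1/‖q − q'‖⁴ + 2/(3 h₂² ‖q − q'‖²))`. -/
theorem mlop_repulsion_gradient (n : ℕ) (q' : EuclideanSpace ℝ (Fin n)) (h₂ : ℝ)
    (hh₂ : 0 < h₂)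
    (F : EuclideanSpace ℝ (Fin n) → ℝ)
    (hF : ∀ q, F q = 1 / (3 * ‖q - q'‖ ^ 3) * Real.exp (-‖q - q'‖ ^ 2 / h₂ ^ 2))
    (β : EuclideanSpace ℝ (Fin n) → ℝ)
    (hβ : ∀ q, β q = Real.exp (-‖q - q'‖ ^ 2 / h₂ ^ 2) / ‖q - q'‖ *
      (1 / ‖q - q'‖ ^ 4 + 2 / (3 * h₂ ^ 2 * ‖q - q'‖ ^ 2))) :
    ∀ q, q ≠ q' → DifferentiableAt ℝ F q ∧ HasGradientAt F ((-β q) • (q - q')) q :=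
  mlop_repulsion_gradient_general n q' h₂ F hF β hβ
end

section
/- Let n ∈ ℕ, ε > 0, h₁ > 0, h₂ > 0, λ ∈ ℝ, let p₁, …, p_J ∈ ℝⁿ and q₁, …, q_m ∈ ℝⁿ be given points, and define G : ℝⁿ → ℝ by G(q) = Σ_{j=1}^J √(‖q − p_j‖² + ε) · exp(−‖q − p_j‖²/h₁²) + λ · Σ_{i=1}^m (1/(3‖q − q_i‖³)) · exp(−‖q − q_i‖²/h₂²). Then at every q ∈ ℝⁿ with q ≠ q_i for all i = 1, …, m, the function G is differentiable and ∇G(q) = Σ_{j=1}^J α_j(q) (q − p_j) − λ Σ_{i=1}^m β_i(q) (q − q_i), where α_j(q) = [exp(−‖q − p_j‖²/h₁²)/√(‖q − p_j‖² + ε)] · (1 − (2/h₁²)(‖q − p_j‖² + ε)) and β_i(q) = [exp(−‖q − q_i‖²/h₂²)/‖q − q_i‖] · (1/‖q − q_i‖⁴ + 2/(3 h₂² ‖q − q_i‖²)). -/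
/-!
Every summand of `G` is radial about its centre `a`: `φ (‖x - a‖ ^ 2)` for the attraction terms
(smooth everywhere since `ε > 0`) and `φ ‖x - a‖` for the repulsion terms (smooth away from `a`).
By the chain rule their gradients are `2 φ'(‖q - a‖²) • (q - a)` and
`(φ'(‖q - a‖) / ‖q - a‖) • (q - a)`, and differentiating the one-variable profiles gives exactly
`αⱼ` and `-βᵢ`.
-/

open Real InnerProductSpace

theorem hasDerivAt_attraction_profile (ε h s : ℝ) (hs : 0 < s + ε) :
    HasDerivAt (fun s => √(s + ε) * exp (-s / h ^ 2))
      (exp (-s / h ^ 2) / (2 * √(s + ε)) * (1 - 2 / h ^ 2 * (s + ε))) s := by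
  have hsqrt : HasDerivAt (fun s => √(s + ε)) (1 / (2 * √(s + ε))) s := by
    simpa using ((hasDerivAt_id s).add_const ε).sqrt hs.ne'
  have hexp : HasDerivAt (fun s => exp (-s / h ^ 2)) (exp (-s / h ^ 2) * (-1 / h ^ 2)) s := by
    simpa using ((hasDerivAt_id s).neg.div_const (h ^ 2)).exp
  refine (hsqrt.fun_mul hexp).congr_deriv ?_
  have hne : √(s + ε) ≠ 0 := (sqrt_pos.2 hs).ne'
  field_simp
  rw [sq_sqrt hs.le]
  ring

theorem hasDerivAt_repulsion_profile (h r : ℝ) (hr : r ≠ 0) :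
    HasDerivAt (fun r => 1 / (3 * r ^ 3) * exp (-r ^ 2 / h ^ 2))
      (-(exp (-r ^ 2 / h ^ 2) * (1 / r ^ 4 + 2 / (3 * h ^ 2 * r ^ 2)))) r := by
  have hpow : HasDerivAt (fun r => 1 / (3 * r ^ 3)) (-1 / r ^ 4) r := by
    refine ((hasDerivAt_const r 1).fun_div ((hasDerivAt_pow 3 r).const_mul 3)
      (by positivity)).congr_deriv ?_
    field_simp
    ring
  have hexp : HasDerivAt (fun r => exp (-r ^ 2 / h ^ 2))
      (exp (-r ^ 2 / h ^ 2) * (-(2 * r) / h ^ 2)) r := by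
    simpa using ((hasDerivAt_pow 2 r).neg.div_const (h ^ 2)).exp
  refine (hpow.fun_mul hexp).congr_deriv ?_
  field_simp
  ring

section

variable {F : Type*} [NormedAddCommGroup F] [InnerProductSpace ℝ F] [CompleteSpace F]
  {f g : F → ℝ} {f' g' x : F}

theorem HasGradientAt.add (hf : HasGradientAt f f' x) (hg : HasGradientAt g g' x) :
    HasGradientAt (fun y => f y + g y) (f' + g') x := by
  rw [hasGradientAt_iff_hasFDerivAt, map_add]
  exact hf.hasFDerivAt.add hg.hasFDerivAt

theorem HasGradientAt.const_mul (c : ℝ) (hf : HasGradientAt f f' x) :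
    HasGradientAt (fun y => c * f y) (c • f') x := by
  rw [hasGradientAt_iff_hasFDerivAt, map_smul]
  exact hf.hasFDerivAt.const_mul c

theorem HasGradientAt.sum {ι : Type*} (s : Finset ι) {f : ι → F → ℝ} {f' : ι → F}
    (h : ∀ i ∈ s, HasGradientAt (f i) (f' i) x) :
    HasGradientAt (fun y => ∑ i ∈ s, f i y) (∑ i ∈ s, f' i) x := by
  rw [hasGradientAt_iff_hasFDerivAt, map_sum]
  exact HasFDerivAt.fun_sum fun i hi => (h i hi).hasFDerivAt

theorem HasDerivAt.hasGradientAt_comp_norm_sub_sq {φ : ℝ → ℝ} {c : ℝ} {a q : F}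
    (hφ : HasDerivAt φ c (‖q - a‖ ^ 2)) :
    HasGradientAt (fun x => φ (‖x - a‖ ^ 2)) ((2 * c) • (q - a)) q := by
  rw [hasGradientAt_iff_hasFDerivAt]
  refine (hφ.comp_hasFDerivAt q ((hasFDerivAt_id q).sub_const a).norm_sq).congr_fderiv ?_
  ext v
  simp only [id_eq, map_sub, ContinuousLinearMap.comp_id, smul_apply,
    sub_apply, coe_innerSL_apply, nsmul_eq_mul, Nat.cast_ofNat, smul_eq_mul,
    map_smul, toDual_apply_apply]
  ring

theorem HasDerivAt.hasGradientAt_comp_norm_sub_s2 {φ : ℝ → ℝ} {c : ℝ} {a q : F} (hq : q ≠ a)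
    (hφ : HasDerivAt φ c ‖q - a‖) :
    HasGradientAt (fun x => φ ‖x - a‖) ((c / ‖q - a‖) • (q - a)) q := by
  have hr : 0 < ‖q - a‖ := norm_pos_iff.2 (sub_ne_zero.2 hq)
  have hsqrt : HasDerivAt Real.sqrt (1 / (2 * ‖q - a‖)) (‖q - a‖ ^ 2) := by
    simpa [sqrt_sq hr.le] using (hasDerivAt_id (‖q - a‖ ^ 2)).sqrt (pow_pos hr 2).ne'
  rw [← sqrt_sq hr.le] at hφ
  have h := (hφ.comp _ hsqrt).hasGradientAt_comp_norm_sub_sq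
  simp only [Function.comp_def, sqrt_sq (norm_nonneg _)] at h
  convert h using 2
  field_simp

theorem hasGradientAt_attraction_term {ε : ℝ} (hε : 0 < ε) (h : ℝ) (a q : F) :
    HasGradientAt (fun x => √(‖x - a‖ ^ 2 + ε) * exp (-‖x - a‖ ^ 2 / h ^ 2))
      ((exp (-‖q - a‖ ^ 2 / h ^ 2) / √(‖q - a‖ ^ 2 + ε) *
        (1 - 2 / h ^ 2 * (‖q - a‖ ^ 2 + ε))) • (q - a)) q := by
  convert (hasDerivAt_attraction_profile ε h _ (by positivity)).hasGradientAt_comp_norm_sub_sq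
    (a := a) using 2
  ring

theorem hasGradientAt_repulsion_term (h : ℝ) {a q : F} (hq : q ≠ a) :
    HasGradientAt (fun x => 1 / (3 * ‖x - a‖ ^ 3) * exp (-‖x - a‖ ^ 2 / h ^ 2))
      (-(exp (-‖q - a‖ ^ 2 / h ^ 2) / ‖q - a‖ *
        (1 / ‖q - a‖ ^ 4 + 2 / (3 * h ^ 2 * ‖q - a‖ ^ 2))) • (q - a)) q := by
  convert (hasDerivAt_repulsion_profile h _
    (norm_ne_zero_iff.2 (sub_ne_zero.2 hq))).hasGradientAt_comp_norm_sub_s2 hq using 2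
  ring

end

theorem mlop_cost_gradient_general (n J m : ℕ) (ε h₁ h₂ lam : ℝ)
    (hε : 0 < ε)
    (p : Fin J → EuclideanSpace ℝ (Fin n)) (qs : Fin m → EuclideanSpace ℝ (Fin n))
    (G : EuclideanSpace ℝ (Fin n) → ℝ)
    (hG : ∀ q, G q =
      (∑ j, Real.sqrt (‖q - p j‖ ^ 2 + ε) * Real.exp (-‖q - p j‖ ^ 2 / h₁ ^ 2)) +
      lam * ∑ i, 1 / (3 * ‖q - qs i‖ ^ 3) * Real.exp (-‖q - qs i‖ ^ 2 / h₂ ^ 2))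
    (α : EuclideanSpace ℝ (Fin n) → Fin J → ℝ)
    (hα : ∀ q j, α q j = Real.exp (-‖q - p j‖ ^ 2 / h₁ ^ 2) / Real.sqrt (‖q - p j‖ ^ 2 + ε) *
      (1 - 2 / h₁ ^ 2 * (‖q - p j‖ ^ 2 + ε)))
    (β : EuclideanSpace ℝ (Fin n) → Fin m → ℝ)
    (hβ : ∀ q i, β q i = Real.exp (-‖q - qs i‖ ^ 2 / h₂ ^ 2) / ‖q - qs i‖ *
      (1 / ‖q - qs i‖ ^ 4 + 2 / (3 * h₂ ^ 2 * ‖q - qs i‖ ^ 2))) :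
    ∀ q, (∀ i, q ≠ qs i) → DifferentiableAt ℝ G q ∧
      HasGradientAt G ((∑ j, α q j • (q - p j)) - lam • ∑ i, β q i • (q - qs i)) q := by
  intro q hq
  have hgrad := (HasGradientAt.sum Finset.univ fun j _ =>
      hasGradientAt_attraction_term hε h₁ (p j) q).add
    ((HasGradientAt.sum Finset.univ fun i _ =>
      hasGradientAt_repulsion_term h₂ (hq i)).const_mul lam)
  rw [← funext hG] at hgrad
  refine ⟨hgrad.differentiableAt, ?_⟩
  convert hgrad using 1
  simp only [hα, hβ, neg_smul, Finset.sum_neg_distrib, smul_neg, sub_eq_add_neg]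

/-- **Gradient of the MLOP cost for a single moving point (equation (3) of the paper).**
For `G q = Σⱼ √(‖q − pⱼ‖² + ε)·exp(−‖q − pⱼ‖²/h₁²) + λ·Σᵢ (1/(3‖q − qᵢ‖³))·exp(−‖q − qᵢ‖²/h₂²)`,
at every `q` distinct from all `qᵢ`, `G` is differentiable and
`∇G(q) = Σⱼ αⱼ(q)(q − pⱼ) − λ Σᵢ βᵢ(q)(q − qᵢ)`. -/
theorem mlop_cost_gradient (n J m : ℕ) (ε h₁ h₂ lam : ℝ)
    (hε : 0 < ε) (hh₁ : 0 < h₁) (hh₂ : 0 < h₂)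
    (p : Fin J → EuclideanSpace ℝ (Fin n)) (qs : Fin m → EuclideanSpace ℝ (Fin n))
    (G : EuclideanSpace ℝ (Fin n) → ℝ)
    (hG : ∀ q, G q =
      (∑ j, Real.sqrt (‖q - p j‖ ^ 2 + ε) * Real.exp (-‖q - p j‖ ^ 2 / h₁ ^ 2)) +
      lam * ∑ i, 1 / (3 * ‖q - qs i‖ ^ 3) * Real.exp (-‖q - qs i‖ ^ 2 / h₂ ^ 2))
    (α : EuclideanSpace ℝ (Fin n) → Fin J → ℝ)
    (hα : ∀ q j, α q j = Real.exp (-‖q - p j‖ ^ 2 / h₁ ^ 2) / Real.sqrt (‖q - p j‖ ^ 2 + ε) *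
      (1 - 2 / h₁ ^ 2 * (‖q - p j‖ ^ 2 + ε)))
    (β : EuclideanSpace ℝ (Fin n) → Fin m → ℝ)
    (hβ : ∀ q i, β q i = Real.exp (-‖q - qs i‖ ^ 2 / h₂ ^ 2) / ‖q - qs i‖ *
      (1 / ‖q - qs i‖ ^ 4 + 2 / (3 * h₂ ^ 2 * ‖q - qs i‖ ^ 2))) :
    ∀ q, (∀ i, q ≠ qs i) → DifferentiableAt ℝ G q ∧
      HasGradientAt G ((∑ j, α q j • (q - p j)) - lam • ∑ i, β q i • (q - qs i)) q :=
  mlop_cost_gradient_general n J m ε h₁ h₂ lam hε p qs G hG α hα β hβ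
end

section
/- Let E be a real inner product space, L > 0, and let f : E → ℝ be differentiable, L-smooth (‖∇f(x₁) − ∇f(x₂)‖ ≤ L‖x₁ − x₂‖ for all x₁, x₂), and bounded below by m ∈ ℝ (f(x) ≥ m for all x). Define the gradient descent iterates x₀ ∈ E, x_{k+1} = x_k − (1/L)∇f(x_k). Then for every K ∈ ℕ, Σ_{k=0}^{K−1} ‖∇f(x_k)‖² ≤ 2L(f(x₀) − m). -/
/-!
The descent lemma `f (x + v) ≤ f x + ⟪∇f x, v⟫ + L/2 ‖v‖²` holds because
`t ↦ f (x + t v) - t ⟪∇f x, v⟫ - L/2 t² ‖v‖²` has derivative `⟪∇f (x + t v) - ∇f x, v⟫ - L t ‖v‖²`,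
which is nonpositive for `t ≥ 0` by Cauchy–Schwarz and the Lipschitz bound. Applied to
`v = -∇f x / L` it shows that each gradient step decreases `f` by at least `‖∇f x‖² / (2L)`;
summing, the decreases telescope to at most `f x₀ - m`.
-/

open Finset

section Descent

variable {E : Type*} [NormedAddCommGroup E] [InnerProductSpace ℝ E]
  {f : E → ℝ} {g : E → E} {L : ℝ}

theorem hasDerivAt_comp_add_smul (hdiff : ∀ x, HasFDerivAt f (innerSL ℝ (g x)) x)
    (x v : E) (t : ℝ) :
    HasDerivAt (fun s : ℝ => f (x + s • v)) (inner ℝ (g (x + t • v)) v) t := by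
  have hline : HasDerivAt (fun s : ℝ => x + s • v) v t := by
    simpa using ((hasDerivAt_id t).smul_const v).const_add x
  exact (hdiff (x + t • v)).comp_hasDerivAt t hline

theorem inner_gradient_sub_le (hlip : ∀ x₁ x₂, ‖g x₁ - g x₂‖ ≤ L * ‖x₁ - x₂‖)
    (x v : E) {t : ℝ} (ht : 0 ≤ t) :
    inner ℝ (g (x + t • v) - g x) v ≤ L * t * ‖v‖ ^ 2 :=
  calc inner ℝ (g (x + t • v) - g x) v ≤ ‖g (x + t • v) - g x‖ * ‖v‖ := real_inner_le_norm _ _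
    _ ≤ L * ‖t • v‖ * ‖v‖ := by
        gcongr
        simpa using hlip (x + t • v) x
    _ = L * t * ‖v‖ ^ 2 := by rw [norm_smul, Real.norm_of_nonneg ht]; ring

theorem le_add_inner_add_sq_of_lipschitz_gradient
    (hdiff : ∀ x, HasFDerivAt f (innerSL ℝ (g x)) x)
    (hlip : ∀ x₁ x₂, ‖g x₁ - g x₂‖ ≤ L * ‖x₁ - x₂‖) (x v : E) :
    f (x + v) ≤ f x + inner ℝ (g x) v + L / 2 * ‖v‖ ^ 2 := by
  set φ : ℝ → ℝ := fun t => f (x + t • v) - t * inner ℝ (g x) v - L / 2 * ‖v‖ ^ 2 * t ^ 2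
  have hφ : ∀ t, HasDerivAt φ
      (inner ℝ (g (x + t • v)) v - inner ℝ (g x) v - L / 2 * ‖v‖ ^ 2 * (2 * t ^ 1)) t :=
    fun t => ((hasDerivAt_comp_add_smul hdiff x v t).sub (hasDerivAt_mul_const _)).sub
      ((hasDerivAt_pow 2 t).const_mul _)
  have hanti : AntitoneOn φ (Set.Ici 0) := by
    refine antitoneOn_of_hasDerivWithinAt_nonpos (convex_Ici 0)
      (fun t _ => (hφ t).continuousAt.continuousWithinAt)
      (fun t _ => (hφ t).hasDerivWithinAt) fun t ht => ?_
    rw [interior_Ici] at ht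
    have hslope := inner_gradient_sub_le hlip x v ht.le
    rw [inner_sub_left] at hslope
    linarith
  have h0 : φ 0 = f x := by simp [φ]
  have h1 : φ 1 = f (x + v) - inner ℝ (g x) v - L / 2 * ‖v‖ ^ 2 := by simp [φ]
  have hφ10 := hanti (Set.mem_Ici.2 le_rfl) (Set.mem_Ici.2 zero_le_one) zero_le_one
  linarith

theorem sq_norm_le_two_mul_sub_gradient_step (hL : 0 < L)
    (hdiff : ∀ x, HasFDerivAt f (innerSL ℝ (g x)) x)
    (hlip : ∀ x₁ x₂, ‖g x₁ - g x₂‖ ≤ L * ‖x₁ - x₂‖) (x : E) :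
    ‖g x‖ ^ 2 ≤ 2 * L * (f x - f (x - L⁻¹ • g x)) := by
  have hdesc := le_add_inner_add_sq_of_lipschitz_gradient hdiff hlip x (-(L⁻¹ • g x))
  rw [← sub_eq_add_neg, inner_neg_right, real_inner_smul_right, real_inner_self_eq_norm_sq,
    norm_neg, norm_smul, mul_pow, Real.norm_of_nonneg (inv_nonneg.2 hL.le)] at hdesc
  have hL' : L / 2 * (L⁻¹ ^ 2 * ‖g x‖ ^ 2) = L⁻¹ / 2 * ‖g x‖ ^ 2 := by field_simp
  rw [hL'] at hdesc
  calc ‖g x‖ ^ 2 = 2 * L * (L⁻¹ / 2 * ‖g x‖ ^ 2) := by field_simp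
    _ ≤ 2 * L * (f x - f (x - L⁻¹ • g x)) := by gcongr; linarith

end Descent

theorem sum_range_le_mul_sub_of_le_mul_sub {a u : ℕ → ℝ} {c m : ℝ} (hc : 0 ≤ c)
    (ha : ∀ k, a k ≤ c * (u k - u (k + 1))) (hm : ∀ k, m ≤ u k) (K : ℕ) :
    ∑ k ∈ range K, a k ≤ c * (u 0 - m) :=
  calc ∑ k ∈ range K, a k ≤ ∑ k ∈ range K, c * (u k - u (k + 1)) := sum_le_sum fun k _ => ha k
    _ = c * (u 0 - u K) := by rw [← mul_sum, sum_range_sub']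
    _ ≤ c * (u 0 - m) := by gcongr; exact hm K

/-- **Summability of squared gradient norms along gradient descent.**
If `f : E → ℝ` is differentiable with `L`-Lipschitz gradient field `g` (`L > 0`) and bounded
below by `m`, then the iterates `x_{k+1} = x_k − (1/L) g(x_k)` satisfy
`Σ_{k=0}^{K−1} ‖g(x_k)‖² ≤ 2L(f(x₀) − m)` for every `K`. -/
theorem gradient_descent_sum_sq {E : Type*} [NormedAddCommGroup E] [InnerProductSpace ℝ E]
    (f : E → ℝ) (g : E → E) (L : ℝ) (hL : 0 < L)
    (hdiff : ∀ x, HasFDerivAt f (innerSL ℝ (g x)) x)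
    (hlip : ∀ x₁ x₂, ‖g x₁ - g x₂‖ ≤ L * ‖x₁ - x₂‖)
    (m : ℝ) (hm : ∀ x, m ≤ f x)
    (x : ℕ → E) (hx : ∀ k, x (k + 1) = x k - L⁻¹ • g (x k)) :
    ∀ K : ℕ, ∑ k ∈ Finset.range K, ‖g (x k)‖ ^ 2 ≤ 2 * L * (f (x 0) - m) :=
  sum_range_le_mul_sub_of_le_mul_sub (by positivity)
    (fun k => hx k ▸ sq_norm_le_two_mul_sub_gradient_step hL hdiff hlip (x k)) fun k => hm (x k)
end

section
/- Let x₁, …, x_K ∈ ℝⁿ be pairwise distinct points, let h > 0, and let y₁, …, y_K ∈ ℝ be arbitrary values. Then there exist unique coefficients λ₁, …, λ_K ∈ ℝ such that Σ_{j=1}^K λ_j exp(−‖x_i − x_j‖²/h²) = y_i for every i = 1, …, K. -/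
/-!
The kernel matrix `Mᵢⱼ = exp(-b‖xᵢ - xⱼ‖²)` is positive definite. By Apollonius,
`exp(-2b‖u - z‖²) exp(-2b‖v - z‖²)` is a Gaussian in `z` centred at the midpoint of `u, v` times
`exp(-b‖u - v‖²)`, so `cᵀMc` equals, up to a positive constant,
`∫ (∑ᵢ cᵢ exp(-2b‖xᵢ - z‖²))² dz`. This integral vanishes only if the integrand does, and the
translated Gaussians are linearly independent: up to nonzero scalars and a common nonvanishing
factor they are the distinct characters `z ↦ exp ⟪2b xᵢ, z⟫`, which are independent by Dedekind's
theorem. A positive definite matrix is invertible, so the interpolation system has exactly one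
solution.
-/

open MeasureTheory Real
open scoped RealInnerProductSpace Matrix

theorem Continuous.integral_pos_of_nonneg_of_ne_zero {X : Type*} [TopologicalSpace X]
    [MeasurableSpace X] [OpensMeasurableSpace X] {μ : Measure X} [μ.IsOpenPosMeasure]
    {f : X → ℝ} (hf : Continuous f) (hf₀ : 0 ≤ f) (hfi : Integrable f μ) (hne : f ≠ 0) :
    0 < ∫ x, f x ∂μ :=
  (integral_nonneg hf₀).lt_of_ne fun h => hne <|
    (hf.ae_eq_iff_eq μ continuous_const).mp ((integral_eq_zero_iff_of_nonneg hf₀ hfi).mp h.symm)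

theorem Finset.sq_sum_mul {ι R : Type*} [CommSemiring R] (s : Finset ι) (c f : ι → R) :
    (∑ i ∈ s, c i * f i) ^ 2 = ∑ i ∈ s, ∑ j ∈ s, c i * c j * (f i * f j) := by
  simp_rw [sq, Finset.sum_mul_sum, mul_mul_mul_comm]

section KernelMatrix

variable {ι E : Type*} [NormedAddCommGroup E]

noncomputable def gaussianKernelMatrix (b : ℝ) (x : ι → E) : Matrix ι ι ℝ :=
  Matrix.of fun i j => rexp (-b * ‖x i - x j‖ ^ 2)

theorem isHermitian_gaussianKernelMatrix (b : ℝ) (x : ι → E) :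
    (gaussianKernelMatrix b x).IsHermitian := by
  ext i j
  simp [gaussianKernelMatrix, norm_sub_rev]

variable [InnerProductSpace ℝ E]

theorem linearIndependent_exp_inner {w : ι → E} (hw : Function.Injective w) :
    LinearIndependent ℝ (fun i (z : E) => rexp ⟪w i, z⟫) := by
  let φ : ι → Multiplicative E →* ℝ := fun i =>
    { toFun := fun z => rexp ⟪w i, z.toAdd⟫
      map_one' := by simp
      map_mul' := fun z z' => by simp [inner_add_right, exp_add] }
  have hφ : Function.Injective φ := fun i j hij => hw <| ext_inner_right ℝ fun z =>
    exp_injective (DFunLike.congr_fun hij (Multiplicative.ofAdd z))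
  exact (linearIndependent_monoidHom (Multiplicative E) ℝ).comp φ hφ

theorem linearIndependent_exp_neg_mul_norm_sub_sq {x : ι → E} (hx : Function.Injective x)
    {a : ℝ} (ha : a ≠ 0) :
    LinearIndependent ℝ (fun i (z : E) => rexp (-a * ‖x i - z‖ ^ 2)) := by
  have hw : Function.Injective fun i => (2 * a) • x i :=
    (smul_right_injective E (mul_ne_zero two_ne_zero ha)).comp hx
  let g := LinearMap.mulLeft ℝ fun z : E => rexp (-a * ‖z‖ ^ 2)
  have hg : LinearMap.ker g = ⊥ :=
    LinearMap.ker_eq_bot.mpr fun f f' hff' => funext fun z =>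
      mul_left_cancel₀ (exp_ne_zero _) (congr_fun hff' z)
  -- `‖x - z‖² = ‖x‖² - 2⟪x, z⟫ + ‖z‖²`
  have hsplit : (fun i (z : E) => rexp (-a * ‖x i - z‖ ^ 2)) = g ∘
      ((fun i => Units.mk0 (rexp (-a * ‖x i‖ ^ 2)) (exp_ne_zero _)) •
        fun i (z : E) => rexp ⟪(2 * a) • x i, z⟫) := by
    ext i z
    simp only [g, Function.comp_apply, LinearMap.mulLeft_apply, Pi.smul_apply', Pi.mul_apply,
      Units.smul_mk0, Pi.smul_apply, smul_eq_mul, real_inner_smul_left, norm_sub_sq_real,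
      ← exp_add]
    ring_nf
  rw [hsplit]
  exact ((linearIndependent_exp_inner hw).units_smul _).map' g hg

theorem exp_neg_mul_norm_sub_sq_mul_exp (b : ℝ) (u v z : E) :
    rexp (-(2 * b) * ‖u - z‖ ^ 2) * rexp (-(2 * b) * ‖v - z‖ ^ 2) =
      rexp (-(4 * b) * ‖z - midpoint ℝ u v‖ ^ 2) * rexp (-b * ‖u - v‖ ^ 2) := by
  have := EuclideanGeometry.dist_sq_add_dist_sq_eq_two_mul_dist_midpoint_sq_add_half_dist_sq z u v
  rw [dist_comm z u, dist_comm z v] at this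
  simp only [dist_eq_norm] at this
  rw [← exp_add, ← exp_add]
  congr 1
  linear_combination (-(2 * b)) * this

variable [FiniteDimensional ℝ E] [MeasurableSpace E] [BorelSpace E]

theorem integral_exp_neg_mul_sq_norm_pos {b : ℝ} (hb : 0 < b) :
    0 < ∫ v : E, rexp (-b * ‖v‖ ^ 2) := by
  rw [GaussianFourier.integral_rexp_neg_mul_sq_norm hb]
  positivity

theorem integrable_exp_neg_mul_sq_norm {b : ℝ} (hb : 0 < b) :
    Integrable fun v : E => rexp (-b * ‖v‖ ^ 2) :=
  .of_integral_ne_zero (integral_exp_neg_mul_sq_norm_pos hb).ne'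

theorem integrable_exp_neg_mul_norm_sub_sq_mul_exp {b : ℝ} (hb : 0 < b) (u v : E) :
    Integrable fun z : E => rexp (-(2 * b) * ‖u - z‖ ^ 2) * rexp (-(2 * b) * ‖v - z‖ ^ 2) := by
  simp_rw [exp_neg_mul_norm_sub_sq_mul_exp]
  exact ((integrable_exp_neg_mul_sq_norm (by positivity)).comp_sub_right
    (midpoint ℝ u v)).mul_const _

theorem integral_exp_neg_mul_norm_sub_sq_mul_exp (b : ℝ) (u v : E) :
    ∫ z : E, rexp (-(2 * b) * ‖u - z‖ ^ 2) * rexp (-(2 * b) * ‖v - z‖ ^ 2) =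
      (∫ z : E, rexp (-(4 * b) * ‖z‖ ^ 2)) * rexp (-b * ‖u - v‖ ^ 2) := by
  simp_rw [exp_neg_mul_norm_sub_sq_mul_exp, integral_mul_const]
  rw [integral_sub_right_eq_self (fun z : E => rexp (-(4 * b) * ‖z‖ ^ 2))]

variable [Fintype ι]

theorem integrable_sq_sum_exp_neg_mul_norm_sub_sq {b : ℝ} (hb : 0 < b) (x : ι → E)
    (c : ι → ℝ) :
    Integrable fun z : E => (∑ i, c i * rexp (-(2 * b) * ‖x i - z‖ ^ 2)) ^ 2 := by
  simp_rw [Finset.sq_sum_mul]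
  exact integrable_finsetSum _ fun i _ => integrable_finsetSum _ fun j _ =>
    (integrable_exp_neg_mul_norm_sub_sq_mul_exp hb (x i) (x j)).const_mul _

theorem integral_sq_sum_exp_neg_mul_norm_sub_sq {b : ℝ} (hb : 0 < b) (x : ι → E)
    (c : ι → ℝ) :
    ∫ z : E, (∑ i, c i * rexp (-(2 * b) * ‖x i - z‖ ^ 2)) ^ 2 =
      (∫ z : E, rexp (-(4 * b) * ‖z‖ ^ 2)) * (c ⬝ᵥ gaussianKernelMatrix b x *ᵥ c) := by
  simp_rw [Finset.sq_sum_mul]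
  rw [integral_finsetSum _ fun i _ => integrable_finsetSum _ fun j _ =>
    (integrable_exp_neg_mul_norm_sub_sq_mul_exp hb (x i) (x j)).const_mul _]
  simp_rw [integral_finsetSum _ fun j _ =>
    (integrable_exp_neg_mul_norm_sub_sq_mul_exp hb _ (x j)).const_mul _,
    integral_const_mul, integral_exp_neg_mul_norm_sub_sq_mul_exp, dotProduct, Matrix.mulVec,
    dotProduct, Finset.mul_sum, gaussianKernelMatrix, Matrix.of_apply]
  exact Finset.sum_congr rfl fun i _ => Finset.sum_congr rfl fun j _ => by ring

theorem posDef_gaussianKernelMatrix {x : ι → E} (hx : Function.Injective x) {b : ℝ}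
    (hb : 0 < b) : (gaussianKernelMatrix b x).PosDef := by
  refine Matrix.posDef_iff_dotProduct_mulVec.mpr ⟨isHermitian_gaussianKernelMatrix b x,
    fun c hc => ?_⟩
  set F : E → ℝ := fun z => ∑ i, c i * rexp (-(2 * b) * ‖x i - z‖ ^ 2)
  have hF : F ≠ 0 := fun hF => hc <| funext <| Fintype.linearIndependent_iff.mp
    (linearIndependent_exp_neg_mul_norm_sub_sq hx (a := 2 * b) (by positivity)) c
    (by ext z; simpa [F] using congr_fun hF z)
  have hFc : Continuous F := by fun_prop
  have hF2 : 0 < ∫ z, F z ^ 2 := (hFc.pow 2).integral_pos_of_nonneg_of_ne_zero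
    (fun z => sq_nonneg (F z)) (integrable_sq_sum_exp_neg_mul_norm_sub_sq hb x c)
    fun h => hF (funext fun z => pow_eq_zero_iff two_ne_zero |>.mp (congr_fun h z))
  rw [integral_sq_sum_exp_neg_mul_norm_sub_sq hb] at hF2
  rw [star_trivial]
  exact pos_of_mul_pos_right hF2 (integral_exp_neg_mul_sq_norm_pos (by positivity)).le

end KernelMatrix

/-- **Well-posedness of Gaussian RBF interpolation.**
For pairwise distinct centers `x₁, …, x_K ∈ ℝⁿ`, `h > 0` and arbitrary values `y₁, …, y_K`,
there exist unique coefficients `λ₁, …, λ_K` with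
`Σⱼ λⱼ exp(−‖xᵢ − xⱼ‖²/h²) = yᵢ` for every `i`. -/
theorem gaussian_rbf_interpolation (n K : ℕ) (x : Fin K → EuclideanSpace ℝ (Fin n))
    (hx : Function.Injective x) (h : ℝ) (hh : 0 < h) (y : Fin K → ℝ) :
    ∃! lam : Fin K → ℝ,
      ∀ i, ∑ j, lam j * Real.exp (-‖x i - x j‖ ^ 2 / h ^ 2) = y i := by
  set M := gaussianKernelMatrix (h ^ 2)⁻¹ x
  have hM : IsUnit M := (posDef_gaussianKernelMatrix hx (by positivity)).isUnit
  have hsystem : ∀ lam, (∀ i, ∑ j, lam j * rexp (-‖x i - x j‖ ^ 2 / h ^ 2) = y i) ↔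
      M *ᵥ lam = y := fun lam => by
    simp only [funext_iff, M, Matrix.mulVec, dotProduct, gaussianKernelMatrix, Matrix.of_apply,
      neg_mul, div_eq_inv_mul, mul_neg, mul_comm (lam _)]
  simp_rw [hsystem]
  exact Function.Bijective.existsUnique
    ⟨Matrix.mulVec_injective_iff_isUnit.mpr hM, Matrix.mulVec_surjective_iff_isUnit.mpr hM⟩ y
end
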